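/- arXiv:1203.1846 — 7 statements merged into one kernel-verified Lean document; each statement's English description precedes it below -/
import Mathlib

section
/- For a 5D type III Weyl operator, i.e. the 10×10 block lower-triangular matrix C with zero diagonal blocks, Č_{±K} = [±Ǩ Ľ] where Ǩ = -2v̌ for a vector v̌ ∈ ℝ³, Ľ_{i[jk]} = 2δ_{i[j}v̌_{k]} + ň_i^l ε_{ljk} with ň traceless symmetric, and (ň, v̌) ≠ (0,0): one has C³ = 0 and C² ≠ 0. -/
open Matrix

/-- Levi-Civita symbol on three indices. -/
def eps (i j k : Fin 3) : ℝ :=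
  if (i = 0 ∧ j = 1 ∧ k = 2) ∨ (i = 1 ∧ j = 2 ∧ k = 0) ∨ (i = 2 ∧ j = 0 ∧ k = 1) then 1
  else if (i = 0 ∧ j = 2 ∧ k = 1) ∨ (i = 2 ∧ j = 1 ∧ k = 0) ∨ (i = 1 ∧ j = 0 ∧ k = 2) then -1
  else 0

/-- The `3 × 3` block `Ľ` of `Č_{±K}`, encoding
`Ľ_{i[jk]} = 2 δ_{i[j} v̌_{k]} + ň_i{}^l ε_{ljk}` (contracted with the dual bivector index):
`L_{im} = Σ_k ε_{mik} v̌_k + ň_{im}`. -/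
def Lmat (n : Matrix (Fin 3) (Fin 3) ℝ) (v : Fin 3 → ℝ) : Matrix (Fin 3) (Fin 3) ℝ :=
  Matrix.of fun i m => (∑ k, eps m i k * v k) + n i m

/-- `Č_K = [Ǩ Ľ]` with first column `Ǩ = -2 v̌`. -/
def CKmat (n : Matrix (Fin 3) (Fin 3) ℝ) (v : Fin 3 → ℝ) :
    Matrix (Fin 3) (Unit ⊕ Fin 3) ℝ :=
  Matrix.of fun i j => Sum.elim (fun _ => -2 * v i) (fun m => Lmat n v i m) j

/-- `Č_{-K} = [-Ǩ Ľ]` with first column `+2 v̌`. -/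
def CmKmat (n : Matrix (Fin 3) (Fin 3) ℝ) (v : Fin 3 → ℝ) :
    Matrix (Fin 3) (Unit ⊕ Fin 3) ℝ :=
  Matrix.of fun i j => Sum.elim (fun _ => 2 * v i) (fun m => Lmat n v i m) j

/-- Bivector index type: 3+4+3 block decomposition `U ⊕ W ⊕ V'`, with
`W` indexed by `Unit ⊕ Fin 3`. -/
abbrev BivIdx := Fin 3 ⊕ (Unit ⊕ Fin 3) ⊕ Fin 3

/-- The 5D type III Weyl operator: block lower-triangular with zero diagonal blocks,
blocks `Č_Kᵗ : U → W`, `Ȟ : U → V'`, `Č_{-K} : W → V'`. -/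
def weylIII (n : Matrix (Fin 3) (Fin 3) ℝ) (v : Fin 3 → ℝ)
    (H : Matrix (Fin 3) (Fin 3) ℝ) : Matrix BivIdx BivIdx ℝ :=
  Matrix.of fun i j =>
    match i, j with
    | Sum.inr (Sum.inl w), Sum.inl u => CKmat n v u w
    | Sum.inr (Sum.inr a), Sum.inl u => H a u
    | Sum.inr (Sum.inr a), Sum.inr (Sum.inl w) => CmKmat n v a w
    | _, _ => 0

private def gdeg : BivIdx → ℕ
  | Sum.inl _ => 0
  | Sum.inr (Sum.inl _) => 1
  | Sum.inr (Sum.inr _) => 2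

private theorem gz (n : Matrix (Fin 3) (Fin 3) ℝ) (v : Fin 3 → ℝ)
    (H : Matrix (Fin 3) (Fin 3) ℝ) (i j : BivIdx) (h : gdeg i ≤ gdeg j) :
    weylIII n v H i j = 0 := by
  rcases i with u | w | a <;> rcases j with u' | w' | a' <;>
    simp [weylIII, gdeg] at h ⊢

private theorem cube (n : Matrix (Fin 3) (Fin 3) ℝ) (v : Fin 3 → ℝ)
    (H : Matrix (Fin 3) (Fin 3) ℝ) : weylIII n v H ^ 3 = 0 := by
  ext i j
  rw [pow_succ, pow_two, Matrix.mul_apply]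
  simp only [Matrix.mul_apply, Finset.sum_mul, Matrix.zero_apply]
  refine Finset.sum_eq_zero fun k _ => Finset.sum_eq_zero fun l _ => ?_
  have hi : gdeg i ≤ 2 := by rcases i with _|_|_ <;> simp [gdeg]
  rcases le_or_gt (gdeg i) (gdeg l) with h | h
  · rw [gz n v H i l h, zero_mul, zero_mul]
  · rcases le_or_gt (gdeg l) (gdeg k) with h2 | h2
    · rw [gz n v H l k h2, mul_zero, zero_mul]
    · have h3 : gdeg k ≤ gdeg j := by omega
      rw [gz n v H k j h3, mul_zero]

set_option maxRecDepth 8000 in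
set_option maxHeartbeats 1000000 in
theorem stmt5' (n : Matrix (Fin 3) (Fin 3) ℝ) (v : Fin 3 → ℝ)
    (H : Matrix (Fin 3) (Fin 3) ℝ)
    (hnsym : n.IsSymm) (hntr : n.trace = 0)
    (hHsym : H.IsSymm) (hHtr : H.trace = 0)
    (hnz : ¬ (n = 0 ∧ v = 0)) :
    weylIII n v H ^ 3 = 0 ∧ weylIII n v H ^ 2 ≠ 0 := by
  refine ⟨cube n v H, fun h => ?_⟩
  have hM : ∀ a b : Fin 3,
      2 * v a * (-2 * v b) +
        ((eps 0 a 0 * v 0 + eps 0 a 1 * v 1 + eps 0 a 2 * v 2 + n a 0) *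
              (eps 0 b 0 * v 0 + eps 0 b 1 * v 1 + eps 0 b 2 * v 2 + n b 0) +
            (eps 1 a 0 * v 0 + eps 1 a 1 * v 1 + eps 1 a 2 * v 2 + n a 1) *
              (eps 1 b 0 * v 0 + eps 1 b 1 * v 1 + eps 1 b 2 * v 2 + n b 1) +
          (eps 2 a 0 * v 0 + eps 2 a 1 * v 1 + eps 2 a 2 * v 2 + n a 2) *
            (eps 2 b 0 * v 0 + eps 2 b 1 * v 1 + eps 2 b 2 * v 2 + n b 2)) = 0 := by
    intro a b
    have hM0 : ((weylIII n v H ^ 2) (Sum.inr (Sum.inr a)) (Sum.inl b) : ℝ) = 0 := by rw [h]; rfl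
    rw [pow_two, Matrix.mul_apply] at hM0
    simpa only [Fintype.sum_sum_type, Finset.univ_unique, Finset.sum_singleton, weylIII,
      Matrix.of_apply, CKmat, CmKmat, Lmat, Sum.elim_inl, Sum.elim_inr, zero_mul, mul_zero,
      Finset.sum_const_zero, add_zero, zero_add, Fin.sum_univ_three] using hM0
  have s01 : n 1 0 = n 0 1 := hnsym.apply 0 1
  have s02 : n 2 0 = n 0 2 := hnsym.apply 0 2
  have s12 : n 2 1 = n 1 2 := hnsym.apply 1 2
  have e00 := hM 0 0; have e01 := hM 0 1; have e02 := hM 0 2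
  have e10 := hM 1 0; have e11 := hM 1 1; have e12 := hM 1 2
  have e20 := hM 2 0; have e21 := hM 2 1; have e22 := hM 2 2
  norm_num [eps, Fin.ext_iff] at e00 e01 e02 e10 e11 e12 e20 e21 e22
  simp only [s01, s02, s12] at e00 e01 e02 e10 e11 e12 e20 e21 e22
  have hkey : 2 * ((v 0)^2 + (v 1)^2 + (v 2)^2)^2 +
      (((n 0 0)*(v 1) - (n 0 1)*(v 0))^2 + ((n 0 0)*(v 2) - (n 0 2)*(v 0))^2 + ((n 0 1)*(v 2) - (n 0 2)*(v 1))^2 +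
       ((n 0 1)*(v 1) - (n 1 1)*(v 0))^2 + ((n 0 1)*(v 2) - (n 1 2)*(v 0))^2 + ((n 1 1)*(v 2) - (n 1 2)*(v 1))^2 +
       ((n 0 2)*(v 1) - (n 1 2)*(v 0))^2 + ((n 0 2)*(v 2) - (n 2 2)*(v 0))^2 + ((n 1 2)*(v 2) - (n 2 2)*(v 1))^2) = 0 := by
    linear_combination ((v 0)^2 + (v 1)^2 + (v 2)^2) * (e00 + e11 + e22) -
      ((v 0)^2 * e00 + (v 0)*(v 1) * e01 + (v 0)*(v 2) * e02 + (v 1)*(v 0) * e10 + (v 1)^2 * e11 +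
       (v 1)*(v 2) * e12 + (v 2)*(v 0) * e20 + (v 2)*(v 1) * e21 + (v 2)^2 * e22)
  have hss : ((v 0)^2 + (v 1)^2 + (v 2)^2)^2 ≤ 0 := by
    linarith [hkey, sq_nonneg ((n 0 0)*(v 1) - (n 0 1)*(v 0)), sq_nonneg ((n 0 0)*(v 2) - (n 0 2)*(v 0)), sq_nonneg ((n 0 1)*(v 2) - (n 0 2)*(v 1)),
      sq_nonneg ((n 0 1)*(v 1) - (n 1 1)*(v 0)), sq_nonneg ((n 0 1)*(v 2) - (n 1 2)*(v 0)), sq_nonneg ((n 1 1)*(v 2) - (n 1 2)*(v 1)),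
      sq_nonneg ((n 0 2)*(v 1) - (n 1 2)*(v 0)), sq_nonneg ((n 0 2)*(v 2) - (n 2 2)*(v 0)), sq_nonneg ((n 1 2)*(v 2) - (n 2 2)*(v 1))]
  clear hkey e01 e02 e10 e12 e20 e21 hM h
  have hs : (v 0)^2 + (v 1)^2 + (v 2)^2 = 0 := by
    clear e00 e11 e22; nlinarith [hss, sq_nonneg (v 0), sq_nonneg (v 1), sq_nonneg (v 2)]
  have hv0 : (v 0) = 0 := by clear e00 e11 e22 hss; nlinarith [hs, sq_nonneg (v 0), sq_nonneg (v 1), sq_nonneg (v 2)]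
  have hv1 : (v 1) = 0 := by clear e00 e11 e22 hss; nlinarith [hs, sq_nonneg (v 0), sq_nonneg (v 1), sq_nonneg (v 2)]
  have hv2 : (v 2) = 0 := by clear e00 e11 e22 hss; nlinarith [hs, sq_nonneg (v 0), sq_nonneg (v 1), sq_nonneg (v 2)]
  clear hss hs
  rw [hv0, hv1, hv2] at e00 e11 e22
  have h00 : n 0 0 = 0 := by
    clear e11 e22; nlinarith [e00, sq_nonneg (n 0 0), sq_nonneg (n 0 1), sq_nonneg (n 0 2)]
  have h01 : n 0 1 = 0 := by
    clear e11 e22; nlinarith [e00, sq_nonneg (n 0 0), sq_nonneg (n 0 1), sq_nonneg (n 0 2)]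
  have h02 : n 0 2 = 0 := by
    clear e11 e22; nlinarith [e00, sq_nonneg (n 0 0), sq_nonneg (n 0 1), sq_nonneg (n 0 2)]
  have h11 : n 1 1 = 0 := by
    clear e00 e22; nlinarith [e11, sq_nonneg (n 0 1), sq_nonneg (n 1 1), sq_nonneg (n 1 2)]
  have h12 : n 1 2 = 0 := by
    clear e00 e22; nlinarith [e11, sq_nonneg (n 0 1), sq_nonneg (n 1 1), sq_nonneg (n 1 2)]
  have h22 : n 2 2 = 0 := by
    clear e00 e11; nlinarith [e22, sq_nonneg (n 0 2), sq_nonneg (n 1 2), sq_nonneg (n 2 2)]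
  have h10 : n 1 0 = 0 := by rw [s01]; exact h01
  have h20 : n 2 0 = 0 := by rw [s02]; exact h02
  have h21 : n 2 1 = 0 := by rw [s12]; exact h12
  have hn : n = 0 := by
    ext i j
    fin_cases i <;> fin_cases j <;> simp only [Matrix.zero_apply] <;>
      first
        | exact h00 | exact h01 | exact h02 | exact h10 | exact h11 | exact h12
        | exact h20 | exact h21 | exact h22
  have hv : v = 0 := by
    funext i; fin_cases i <;> [exact hv0; exact hv1; exact hv2]
  exact hnz ⟨hn, hv⟩

/-- A 5D type III Weyl operator is nilpotent of index 3: `C³ = 0 ≠ C²`. -/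
theorem stmt5 (n : Matrix (Fin 3) (Fin 3) ℝ) (v : Fin 3 → ℝ)
    (H : Matrix (Fin 3) (Fin 3) ℝ)
    (hnsym : n.IsSymm) (hntr : n.trace = 0)
    (hHsym : H.IsSymm) (hHtr : H.trace = 0)
    (hnz : ¬ (n = 0 ∧ v = 0)) :
    weylIII n v H ^ 3 = 0 ∧ weylIII n v H ^ 2 ≠ 0 := by
  exact stmt5' n v H hnsym hntr hHsym hHtr hnz
end

section
/- For a type III Weyl operator C (block form as above), one has 4 ≤ 2·rank(Č_K) ≤ rank(C) ≤ 3 + rank(Č_K) ≤ 6, and rank(Č_K) ∈ {2, 3}. -/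
open Matrix

/-!
`C` is strictly block lower triangular for `U ⊕ W ⊕ V'`. Its rows `W ⊕ V'` against its columns
`U ⊕ W` form the block lower triangular matrix `[[Č_Kᵗ, 0], [Ȟ, Č_{-K}]]`, whose rank is at least
`rank Č_Kᵗ + rank Č_{-K} = 2 rank Č_K`; its columns indexed by `U` contribute at most `3` to the
rank and those indexed by `W` at most `rank Č_{-K}`. Finally `rank Č_K ≤ 1` would force all
`2 × 2` minors of `Č_K` to vanish, and suitable sums of these minors are `4 |v̌|²` and
`-(1/2) tr(ňᵀň)`, so `(ň, v̌) = 0`.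
-/

namespace Matrix

variable {R : Type*} [Field R] {m n m' n' m₁ m₂ n₁ n₂ : Type*}

theorem rank_add_le [Fintype n] (A B : Matrix m n R) : (A + B).rank ≤ A.rank + B.rank := by
  have h : LinearMap.range (A + B).mulVecLin ≤
      LinearMap.range A.mulVecLin ⊔ LinearMap.range B.mulVecLin := by
    rintro _ ⟨x, rfl⟩
    rw [mulVecLin_add, LinearMap.add_apply]
    exact Submodule.add_mem_sup ⟨x, rfl⟩ ⟨x, rfl⟩
  exact (Submodule.finrank_mono h).trans (Submodule.finrank_add_le_finrank_add_finrank _ _)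

/-- Rank–nullity for `P` restricted to the column space of `C`: the columns of `C * Q` lie in
that column space and in the kernel of `P`. -/
theorem rank_mul_add_rank_mul_le [Fintype m] [Fintype n] [Fintype m'] [Fintype n']
    (P : Matrix m' m R) (C : Matrix m n R) (Q : Matrix n n' R) (h : P * C * Q = 0) :
    (P * C).rank + (C * Q).rank ≤ C.rank := by
  set g := P.mulVecLin.domRestrict (LinearMap.range C.mulVecLin)
  have hrange : LinearMap.range g = LinearMap.range (P * C).mulVecLin := by
    rw [LinearMap.range_domRestrict, mulVecLin_mul, LinearMap.range_comp]
  have hker : LinearMap.range (C * Q).mulVecLin ≤ (LinearMap.ker g).map (Submodule.subtype _) := by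
    rw [LinearMap.ker_domRestrict, Submodule.map_comap_subtype]
    rintro _ ⟨x, rfl⟩
    refine ⟨?_, ?_⟩
    · rw [mulVecLin_mul]
      exact ⟨_, rfl⟩
    · simp [mulVec_mulVec, ← Matrix.mul_assoc, h]
  calc (P * C).rank + (C * Q).rank
      ≤ Module.finrank R (LinearMap.range g) + Module.finrank R (LinearMap.ker g) := by
        rw [← Submodule.finrank_map_subtype_eq _ (LinearMap.ker g), hrange]
        exact Nat.add_le_add_left (Submodule.finrank_mono hker) _
    _ = C.rank := g.finrank_range_add_finrank_ker

theorem minor_eq_zero_of_rank_lt_two [Fintype m] [Fintype n] {M : Matrix m n R}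
    (hM : M.rank < 2) (i₀ i₁ : m) (j₀ j₁ : n) : M i₀ j₀ * M i₁ j₁ - M i₀ j₁ * M i₁ j₀ = 0 := by
  have hdet : (M.submatrix ![i₀, i₁] ![j₀, j₁]).det = 0 := by
    by_contra h
    have := (rank_of_det_ne_zero h).symm.trans_le (rank_submatrix_le M _ _)
    simp only [Fintype.card_fin] at this
    omega
  rwa [det_fin_two] at hdet

variable [Fintype m₂] [Fintype n₁] [Fintype n₂]
  [DecidableEq m₂] [DecidableEq n₁] [DecidableEq n₂]

theorem rank_fromBlocks_zero_zero_le (C : Matrix m₂ n₁ R) (D : Matrix m₂ n₂ R) :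
    (fromBlocks (0 : Matrix m₁ n₁ R) (0 : Matrix m₁ n₂ R) C D).rank ≤ C.rank + D.rank := by
  have h : fromBlocks (0 : Matrix m₁ n₁ R) (0 : Matrix m₁ n₂ R) C D =
      fromRows 0 (1 : Matrix m₂ m₂ R) * C * fromCols (1 : Matrix n₁ n₁ R) 0 +
        fromRows 0 (1 : Matrix m₂ m₂ R) * D * fromCols 0 (1 : Matrix n₂ n₂ R) := by
    ext (i | i) (j | j) <;> simp
  rw [h]
  refine (rank_add_le _ _).trans (Nat.add_le_add ?_ ?_) <;>
    exact (rank_mul_le_left _ _).trans (rank_mul_le_right _ _)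

theorem rank_add_rank_le_rank_fromBlocks_zero₁₂ [Fintype m₁] [DecidableEq m₁] (A : Matrix m₁ n₁ R)
    (C : Matrix m₂ n₁ R) (D : Matrix m₂ n₂ R) : A.rank + D.rank ≤ (fromBlocks A 0 C D).rank := by
  set M := fromBlocks A 0 C D
  set P := fromCols (1 : Matrix m₁ m₁ R) (0 : Matrix m₁ m₂ R)
  set Q := fromRows (0 : Matrix n₁ n₂ R) (1 : Matrix n₂ n₂ R)
  have hPQ : P * M * Q = 0 := by
    simp [P, Q, M, fromCols_mul_fromBlocks, fromCols_mul_fromRows]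
  have hA : A = P * M * fromRows (1 : Matrix n₁ n₁ R) (0 : Matrix n₂ n₁ R) := by
    simp [P, M, fromCols_mul_fromBlocks, fromCols_mul_fromRows]
  have hD : D = fromCols (0 : Matrix m₂ m₁ R) (1 : Matrix m₂ m₂ R) * (M * Q) := by
    simp [Q, M, fromBlocks_mul_fromRows, fromCols_mul_fromRows]
  calc A.rank + D.rank ≤ (P * M).rank + (M * Q).rank := by
        refine Nat.add_le_add ?_ ?_
        · conv_lhs => rw [hA]
          exact rank_mul_le_left _ _
        · conv_lhs => rw [hD]
          exact rank_mul_le_right _ _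
    _ ≤ M.rank := rank_mul_add_rank_mul_le _ _ _ hPQ

end Matrix

section WeylTypeIII

variable (n : Matrix (Fin 3) (Fin 3) ℝ) (v : Fin 3 → ℝ) (H : Matrix (Fin 3) (Fin 3) ℝ)

theorem CmKmat_eq_CKmat_mul_diagonal :
    CmKmat n v =
      CKmat n v * diagonal (Sum.elim (fun _ : Unit => (-1 : ℝ)) fun _ : Fin 3 => 1) := by
  ext i (_ | m) <;> simp [CKmat, CmKmat]

theorem rank_CmKmat : (CmKmat n v).rank = (CKmat n v).rank := by
  rw [CmKmat_eq_CKmat_mul_diagonal]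
  exact rank_mul_eq_left_of_det_ne_zero _ _ (by simp [det_diagonal, Fintype.prod_sum_type])

theorem rank_CKmat_le_three : (CKmat n v).rank ≤ 3 := by
  simpa using (CKmat n v).rank_le_card_height

theorem weylIII_eq_fromBlocks :
    weylIII n v H = fromBlocks 0 0 (fromRows (CKmat n v)ᵀ H) (fromBlocks 0 0 (CmKmat n v) 0) := by
  ext (u | w | a) (u' | w' | a') <;> rfl

theorem weylIII_submatrix_eq_fromBlocks :
    (weylIII n v H).submatrix Sum.inr (Sum.elim Sum.inl (Sum.inr ∘ Sum.inl)) =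
      fromBlocks (CKmat n v)ᵀ 0 H (CmKmat n v) := by
  ext (w | a) (u | w') <;> rfl

theorem two_mul_rank_CKmat_le_rank_weylIII : 2 * (CKmat n v).rank ≤ (weylIII n v H).rank :=
  calc 2 * (CKmat n v).rank = (CKmat n v)ᵀ.rank + (CmKmat n v).rank := by
        rw [rank_transpose, rank_CmKmat, two_mul]
    _ ≤ (fromBlocks (CKmat n v)ᵀ 0 H (CmKmat n v)).rank :=
        rank_add_rank_le_rank_fromBlocks_zero₁₂ _ _ _
    _ ≤ (weylIII n v H).rank := by
        rw [← weylIII_submatrix_eq_fromBlocks]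
        exact rank_submatrix_le _ _ _

theorem rank_weylIII_le : (weylIII n v H).rank ≤ 3 + (CKmat n v).rank :=
  calc (weylIII n v H).rank
      ≤ (fromRows (CKmat n v)ᵀ H).rank + (fromBlocks 0 0 (CmKmat n v) 0).rank := by
        rw [weylIII_eq_fromBlocks]
        exact rank_fromBlocks_zero_zero_le _ _
    _ ≤ 3 + ((CmKmat n v).rank + (0 : Matrix (Fin 3) (Fin 3) ℝ).rank) :=
        Nat.add_le_add ((rank_le_card_width _).trans_eq (Fintype.card_fin 3))
          (rank_fromBlocks_zero_zero_le _ _)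
    _ = 3 + (CKmat n v).rank := by rw [rank_zero, add_zero, rank_CmKmat]

variable {n v}

/-- The three cyclic minors pairing `Ǩ = -2 v̌` with a column of `Ľ` add up to `4 |v̌|²`;
the `ň`-terms cancel because `ň` is symmetric. -/
theorem eq_zero_of_rank_CKmat_lt_two (hn : n.IsSymm) (h : (CKmat n v).rank < 2) : v = 0 := by
  have e0 := minor_eq_zero_of_rank_lt_two h 1 2 (.inl ()) (.inr 0)
  have e1 := minor_eq_zero_of_rank_lt_two h 2 0 (.inl ()) (.inr 1)
  have e2 := minor_eq_zero_of_rank_lt_two h 0 1 (.inl ()) (.inr 2)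
  simp only [CKmat, neg_mul, Lmat, eps, Fin.isValue, ite_mul, one_mul, zero_mul,
    Fin.sum_univ_three, Fin.reduceEq, and_false, and_true, zero_ne_one, or_false, false_or,
    one_ne_zero, or_self, of_apply, ↓reduceIte, add_zero, Sum.elim_inl, Sum.elim_inr, zero_add,
    mul_neg, sub_neg_eq_add] at e0 e1 e2
  refine dotProduct_self_eq_zero.1 ?_
  simp only [dotProduct, Fin.sum_univ_three]
  linear_combination (1/4) * e0 + (1/4) * e1 + (1/4) * e2 + (1/2) * v 1 * hn.apply 0 2
    - (1/2) * v 2 * hn.apply 0 1 - (1/2) * v 0 * hn.apply 1 2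

/-- For traceless symmetric `ň` the principal `2 × 2` minors add up to `-(1/2) tr(ňᵀň)`. -/
theorem eq_zero_of_rank_CKmat_zero_lt_two (hn : n.IsSymm) (htr : n.trace = 0)
    (h : (CKmat n 0).rank < 2) : n = 0 := by
  have e01 := minor_eq_zero_of_rank_lt_two h 0 1 (.inr 0) (.inr 1)
  have e02 := minor_eq_zero_of_rank_lt_two h 0 2 (.inr 0) (.inr 2)
  have e12 := minor_eq_zero_of_rank_lt_two h 1 2 (.inr 1) (.inr 2)
  simp only [CKmat, Lmat, of_apply, Sum.elim_inr, Pi.zero_apply, mul_zero, Finset.sum_const_zero,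
    zero_add] at e01 e02 e12
  simp only [trace, diag, Fin.sum_univ_three] at htr
  refine trace_conjTranspose_mul_self_eq_zero_iff.1 ?_
  simp only [conjTranspose_eq_transpose_of_trivial, trace, diag, mul_apply, transpose_apply,
    Fin.sum_univ_three]
  linear_combination (n 0 0 + n 1 1 + n 2 2) * htr - 2 * e01 - 2 * e02 - 2 * e12
    + (n 1 0 - n 0 1) * hn.apply 0 1 + (n 2 0 - n 0 2) * hn.apply 0 2
    + (n 2 1 - n 1 2) * hn.apply 1 2

theorem two_le_rank_CKmat (hn : n.IsSymm) (htr : n.trace = 0) (hnz : ¬ (n = 0 ∧ v = 0)) :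
    2 ≤ (CKmat n v).rank := by
  by_contra! h
  obtain rfl := eq_zero_of_rank_CKmat_lt_two hn h
  exact hnz ⟨eq_zero_of_rank_CKmat_zero_lt_two hn htr h, rfl⟩

end WeylTypeIII

theorem stmt7_general (n : Matrix (Fin 3) (Fin 3) ℝ) (v : Fin 3 → ℝ)
    (H : Matrix (Fin 3) (Fin 3) ℝ)
    (hnsym : n.IsSymm) (hntr : n.trace = 0)
    (hnz : ¬ (n = 0 ∧ v = 0)) :
    4 ≤ 2 * (CKmat n v).rank ∧
    2 * (CKmat n v).rank ≤ (weylIII n v H).rank ∧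
    (weylIII n v H).rank ≤ 3 + (CKmat n v).rank ∧
    3 + (CKmat n v).rank ≤ 6 ∧
    ((CKmat n v).rank = 2 ∨ (CKmat n v).rank = 3) := by
  have h2 := two_le_rank_CKmat hnsym hntr hnz
  have h3 := rank_CKmat_le_three n v
  exact ⟨by omega, two_mul_rank_CKmat_le_rank_weylIII n v H, rank_weylIII_le n v H, by omega,
    by omega⟩

/-- For a 5D type III Weyl operator:
`4 ≤ 2 rank(Č_K) ≤ rank C ≤ 3 + rank(Č_K) ≤ 6`, and `rank(Č_K) ∈ {2, 3}`. -/
theorem stmt7 (n : Matrix (Fin 3) (Fin 3) ℝ) (v : Fin 3 → ℝ)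
    (H : Matrix (Fin 3) (Fin 3) ℝ)
    (hnsym : n.IsSymm) (hntr : n.trace = 0)
    (hHsym : H.IsSymm) (hHtr : H.trace = 0)
    (hnz : ¬ (n = 0 ∧ v = 0)) :
    4 ≤ 2 * (CKmat n v).rank ∧
    2 * (CKmat n v).rank ≤ (weylIII n v H).rank ∧
    (weylIII n v H).rank ≤ 3 + (CKmat n v).rank ∧
    3 + (CKmat n v).rank ≤ 6 ∧
    ((CKmat n v).rank = 2 ∨ (CKmat n v).rank = 3) :=
  stmt7_general n v H hnsym hntr hnz
end

section
/- With M and Ω as in the 5D type II Weyl operator (M the 3×3 b.w.-0 block, Ω the 4×4 b.w.-0 block, built from traceless S = diag with R_i = S_i + R/3 and w ∈ ℝ³): both M and Ω are nilpotent if and only if, after a suitable permutation of indices, R = 0, R₄ = 0, R₃ = -R₅ ≠ 0, 2w₃² = 2w₅² = R₅², and w₄ = 0. In that case M³ = 0 ≠ M² and Ω³ = 0 ≠ Ω². -/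
/-!
With `D = diag (R₃, R₄, R₅)` we have `-2M = D + [w]ₓ` and, once `R = 0`,
`Ω = [[0, -wᵀ], [w, -D]]`. The traces of `M`, `M²`, `M³`, `Ω³`, `Ω⁴` are power sums in the
`R_i` and `w_i²`; their vanishing forces some `R_j = 0`, and then (over `ℝ`) `2 w_i² = R_i²`
for every `i`. Conversely this permutation-free condition, together with `∑ R_i = ∏ R_i = 0`,
makes `M³` and `Ω³` vanish entrywise, while the diagonal entry
`(R_j² + w_j² - |w|²)/4 = -|w|²/4` of `M²` and the corner entry `-|w|²` of `Ω²` are nonzero.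
-/

open Matrix

theorem Matrix.trace_pow_eq_zero_of_isNilpotent {n R : Type*} [Fintype n] [DecidableEq n]
    [CommRing R] [IsReduced R] {A : Matrix n n R} (hA : IsNilpotent A) {k : ℕ} (hk : k ≠ 0) :
    trace (A ^ k) = 0 :=
  (isNilpotent_trace_of_isNilpotent (hA.pow_of_pos hk)).eq_zero

noncomputable def weylM (Rv w : Fin 3 → ℝ) : Matrix (Fin 3) (Fin 3) ℝ :=
  !![-Rv 0 / 2, -w 2 / 2, w 1 / 2; w 2 / 2, -Rv 1 / 2, -w 0 / 2; -w 1 / 2, w 0 / 2, -Rv 2 / 2]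

noncomputable def weylΩ (R : ℝ) (Rv w : Fin 3 → ℝ) : Matrix (Fin 4) (Fin 4) ℝ :=
  !![R/2, -(w 0), -(w 1), -(w 2);
     w 0, R/2 - Rv 0, 0, 0;
     w 1, 0, R/2 - Rv 1, 0;
     w 2, 0, 0, R/2 - Rv 2]

theorem of_eps_eq_weylM (Rv w : Fin 3 → ℝ) :
    (Matrix.of fun i j => (if i = j then -(Rv i) / 2 else 0) - (1/2) * ∑ k, eps i j k * w k) =
      weylM Rv w := by
  ext i j
  fin_cases i <;> fin_cases j <;> simp [weylM, eps, Fin.sum_univ_three] <;> ring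

structure NilpotentWeylData (Rv w : Fin 3 → ℝ) : Prop where
  sum_eq_zero : ∑ i, Rv i = 0
  prod_eq_zero : ∏ i, Rv i = 0
  two_mul_sq : ∀ i, 2 * w i ^ 2 = Rv i ^ 2

section

variable (Rv w : Fin 3 → ℝ)

theorem trace_weylM : trace (weylM Rv w) = -(∑ i, Rv i) / 2 := by
  simp [weylM, trace_fin_three, Fin.sum_univ_three]; ring

theorem trace_weylM_sq : trace (weylM Rv w ^ 2) = (∑ i, Rv i ^ 2 - 2 * ∑ i, w i ^ 2) / 4 := by
  simp [weylM, trace_fin_three, Fin.sum_univ_three, sq]; ring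

theorem trace_weylM_pow_three : trace (weylM Rv w ^ 3) =
    -(∑ i, Rv i ^ 3 - 3 * (∑ i, Rv i) * ∑ i, w i ^ 2 + 3 * ∑ i, Rv i * w i ^ 2) / 8 := by
  simp [weylM, trace_fin_three, Fin.sum_univ_three, pow_succ]; ring

theorem trace_weylΩ_pow_three : trace (weylΩ 0 Rv w ^ 3) =
    3 * ∑ i, Rv i * w i ^ 2 - ∑ i, Rv i ^ 3 := by
  simp [weylΩ, Matrix.trace, Fin.sum_univ_three, Fin.sum_univ_four, pow_succ]; ring

theorem trace_weylΩ_pow_four : trace (weylΩ 0 Rv w ^ 4) =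
    ∑ i, Rv i ^ 4 + 2 * (∑ i, w i ^ 2) ^ 2 - 4 * ∑ i, Rv i ^ 2 * w i ^ 2 := by
  simp [weylΩ, Matrix.trace, Fin.sum_univ_three, Fin.sum_univ_four, pow_succ]; ring

theorem weylM_sq_apply_self (i : Fin 3) :
    (weylM Rv w ^ 2) i i = (Rv i ^ 2 + w i ^ 2 - ∑ k, w k ^ 2) / 4 := by
  fin_cases i <;> simp [weylM, sq, mul_apply, Fin.sum_univ_three] <;> ring

theorem weylΩ_sq_apply_zero_zero : (weylΩ 0 Rv w ^ 2) 0 0 = -∑ i, w i ^ 2 := by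
  simp [weylΩ, sq, mul_apply, Fin.sum_univ_three, Fin.sum_univ_four]; ring

end

theorem sq_eq_of_power_sums {a b c x y z : ℝ} (hb : b = 0) (h1 : a + b + c = 0)
    (h2 : a ^ 2 + b ^ 2 + c ^ 2 = 2 * (x ^ 2 + y ^ 2 + z ^ 2))
    (h3 : a * x ^ 2 + b * y ^ 2 + c * z ^ 2 = 0)
    (h4 : a ^ 4 + b ^ 4 + c ^ 4 + 2 * (x ^ 2 + y ^ 2 + z ^ 2) ^ 2 =
      4 * (a ^ 2 * x ^ 2 + b ^ 2 * y ^ 2 + c ^ 2 * z ^ 2)) :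
    2 * x ^ 2 = a ^ 2 ∧ 2 * y ^ 2 = b ^ 2 ∧ 2 * z ^ 2 = c ^ 2 := by
  subst hb
  obtain rfl : c = -a := by linarith
  rcases eq_or_ne a 0 with rfl | ha
  · have hx : x = 0 := by nlinarith [sq_nonneg x, sq_nonneg y, sq_nonneg z]
    have hy : y = 0 := by nlinarith [sq_nonneg x, sq_nonneg y, sq_nonneg z]
    have hz : z = 0 := by nlinarith [sq_nonneg x, sq_nonneg y, sq_nonneg z]
    simp [hx, hy, hz]
  · have hxz : z ^ 2 = x ^ 2 := by
      have : a * (x ^ 2 - z ^ 2) = 0 := by linear_combination h3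
      linarith [(mul_eq_zero.mp this).resolve_left ha]
    have hW : x ^ 2 + y ^ 2 + z ^ 2 = a ^ 2 := by linear_combination -h2 / 2
    have hx : 2 * x ^ 2 = a ^ 2 := by
      have : a ^ 2 * (a ^ 2 - 2 * x ^ 2) = 0 := by
        rw [hW] at h4; linear_combination h4 / 4 + a ^ 2 * hxz
      linarith [(mul_eq_zero.mp this).resolve_left (pow_ne_zero 2 ha)]
    exact ⟨hx, by linarith, by linear_combination hx + 2 * hxz⟩

theorem nilpotentWeylData_of_power_sums {Rv w : Fin 3 → ℝ} (h1 : ∑ i, Rv i = 0)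
    (h2 : ∑ i, Rv i ^ 2 = 2 * ∑ i, w i ^ 2) (h3 : ∑ i, Rv i ^ 3 = 0)
    (hw : ∑ i, Rv i * w i ^ 2 = 0)
    (h4 : ∑ i, Rv i ^ 4 + 2 * (∑ i, w i ^ 2) ^ 2 = 4 * ∑ i, Rv i ^ 2 * w i ^ 2) :
    NilpotentWeylData Rv w := by
  have hprod : ∏ i, Rv i = 0 := by
    simp only [Fin.sum_univ_three, Fin.prod_univ_three] at h1 h3 ⊢
    linear_combination h3 / 3 - (Rv 0 ^ 2 + Rv 1 ^ 2 + Rv 2 ^ 2 - Rv 0 * Rv 1 - Rv 0 * Rv 2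
      - Rv 1 * Rv 2) / 3 * h1
  refine ⟨h1, hprod, ?_⟩
  simp only [Fin.sum_univ_three] at h1 h2 hw h4
  obtain (hj | hj) | hj : (Rv 0 = 0 ∨ Rv 1 = 0) ∨ Rv 2 = 0 := by
    simpa [Fin.prod_univ_three] using hprod
  · obtain ⟨h₁, h₀, h₂⟩ :=
      sq_eq_of_power_sums (a := Rv 1) (c := Rv 2) (x := w 1) (y := w 0) (z := w 2) hj
      (by linear_combination h1) (by linear_combination h2) (by linear_combination hw)
      (by linear_combination h4)
    intro i; fin_cases i <;> assumption
  · obtain ⟨h₀, h₁, h₂⟩ := sq_eq_of_power_sums hj h1 h2 hw h4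
    intro i; fin_cases i <;> assumption
  · obtain ⟨h₀, h₂, h₁⟩ :=
      sq_eq_of_power_sums (a := Rv 0) (c := Rv 1) (x := w 0) (y := w 2) (z := w 1) hj
      (by linear_combination h1) (by linear_combination h2) (by linear_combination hw)
      (by linear_combination h4)
    intro i; fin_cases i <;> assumption

theorem sum_eq_zero_of_isNilpotent_weylM {Rv w : Fin 3 → ℝ} (hM : IsNilpotent (weylM Rv w)) :
    ∑ i, Rv i = 0 := by
  have := trace_pow_eq_zero_of_isNilpotent hM one_ne_zero
  rw [pow_one, trace_weylM] at this
  linarith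

theorem nilpotentWeylData_of_isNilpotent {Rv w : Fin 3 → ℝ} (hM : IsNilpotent (weylM Rv w))
    (hΩ : IsNilpotent (weylΩ 0 Rv w)) : NilpotentWeylData Rv w := by
  have h1 := sum_eq_zero_of_isNilpotent_weylM hM
  have hM2 := trace_pow_eq_zero_of_isNilpotent hM two_ne_zero
  have hM3 := trace_pow_eq_zero_of_isNilpotent hM three_ne_zero
  have hΩ3 := trace_pow_eq_zero_of_isNilpotent hΩ three_ne_zero
  have hΩ4 := trace_pow_eq_zero_of_isNilpotent hΩ four_ne_zero
  rw [trace_weylM_sq] at hM2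
  rw [trace_weylM_pow_three, h1] at hM3
  rw [trace_weylΩ_pow_three] at hΩ3
  rw [trace_weylΩ_pow_four] at hΩ4
  exact nilpotentWeylData_of_power_sums h1 (by linarith) (by linarith) (by linarith) (by linarith)

namespace NilpotentWeylData

variable {Rv w : Fin 3 → ℝ}

theorem eq_zero_of_sum_sq_eq_zero (h : NilpotentWeylData Rv w) (hW : ∑ i, w i ^ 2 = 0) :
    Rv = 0 ∧ w = 0 := by
  have hw : ∀ i, w i = 0 := fun i => pow_eq_zero_iff two_ne_zero |>.mp
    ((Finset.sum_eq_zero_iff_of_nonneg fun i _ => sq_nonneg (w i)).mp hW i (Finset.mem_univ i))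
  refine ⟨funext fun i => pow_eq_zero_iff two_ne_zero |>.mp ?_, funext hw⟩
  simp [← h.two_mul_sq, hw]

theorem weylM_pow_three (h : NilpotentWeylData Rv w) : weylM Rv w ^ 3 = 0 := by
  obtain ⟨hsum, hprod, hw⟩ := h
  simp only [Fin.sum_univ_three, Fin.prod_univ_three] at hsum hprod
  have := hw 0; have := hw 1; have := hw 2
  ext i j
  fin_cases i <;> fin_cases j <;> simp [weylM, pow_succ, mul_apply, Fin.sum_univ_three] <;> grind

theorem weylΩ_pow_three (h : NilpotentWeylData Rv w) : weylΩ 0 Rv w ^ 3 = 0 := by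
  obtain ⟨hsum, hprod, hw⟩ := h
  simp only [Fin.sum_univ_three, Fin.prod_univ_three] at hsum hprod
  have := hw 0; have := hw 1; have := hw 2
  ext i j
  fin_cases i <;> fin_cases j <;> simp [weylΩ, pow_succ, mul_apply, Fin.sum_univ_four] <;> grind

theorem weylM_sq_ne_zero (h : NilpotentWeylData Rv w) (hnz : ¬(Rv = 0 ∧ w = 0)) :
    weylM Rv w ^ 2 ≠ 0 := by
  intro h2
  obtain ⟨j, -, hj⟩ := Finset.prod_eq_zero_iff.mp h.prod_eq_zero
  have hwj : w j = 0 := by simpa [hj] using h.two_mul_sq j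
  have := weylM_sq_apply_self Rv w j
  rw [h2, Matrix.zero_apply, hj, hwj] at this
  exact hnz (h.eq_zero_of_sum_sq_eq_zero (by linarith))

theorem weylΩ_sq_ne_zero (h : NilpotentWeylData Rv w) (hnz : ¬(Rv = 0 ∧ w = 0)) :
    weylΩ 0 Rv w ^ 2 ≠ 0 := by
  intro h2
  have := weylΩ_sq_apply_zero_zero Rv w
  rw [h2, Matrix.zero_apply] at this
  exact hnz (h.eq_zero_of_sum_sq_eq_zero (by linarith))

end NilpotentWeylData

theorem nilpotentWeylData_iff_exists_perm {Rv w : Fin 3 → ℝ} (hnz : ¬(Rv = 0 ∧ w = 0)) :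
    NilpotentWeylData Rv w ↔ ∃ σ : Equiv.Perm (Fin 3),
      Rv (σ 1) = 0 ∧ Rv (σ 0) = -(Rv (σ 2)) ∧ Rv (σ 2) ≠ 0 ∧
      2 * (w (σ 0)) ^ 2 = (Rv (σ 2)) ^ 2 ∧ 2 * (w (σ 2)) ^ 2 = (Rv (σ 2)) ^ 2 ∧
      w (σ 1) = 0 := by
  have sum_perm (σ : Equiv.Perm (Fin 3)) (f : Fin 3 → ℝ) :
      ∑ i, f i = f (σ 0) + f (σ 1) + f (σ 2) := by
    rw [← Equiv.sum_comp σ, Fin.sum_univ_three]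
  constructor
  · intro h
    obtain ⟨j, -, hj⟩ := Finset.prod_eq_zero_iff.mp h.prod_eq_zero
    set σ := Equiv.swap 1 j
    have h1 : Rv (σ 1) = 0 := by simpa [σ] using hj
    have hw1 : w (σ 1) = 0 := by simpa [h1] using h.two_mul_sq (σ 1)
    have h02 : Rv (σ 0) = -Rv (σ 2) := by linarith [sum_perm σ Rv ▸ h.sum_eq_zero]
    have h2 : Rv (σ 2) ≠ 0 := by
      intro h2
      refine hnz (h.eq_zero_of_sum_sq_eq_zero ?_)
      rw [sum_perm σ]
      linear_combination (h.two_mul_sq (σ 0) + h.two_mul_sq (σ 2)) / 2 + (Rv (σ 0) / 2) * h02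
        + ((Rv (σ 2) - Rv (σ 0)) / 2) * h2 + w (σ 1) * hw1
    refine ⟨σ, h1, h02, h2, ?_, h.two_mul_sq _, hw1⟩
    rw [h.two_mul_sq, h02, neg_sq]
  · rintro ⟨σ, h1, h02, -, hw0, hw2, hw1⟩
    refine ⟨by rw [sum_perm σ]; linarith, ?_, fun i => ?_⟩
    · rw [← Equiv.prod_comp σ, Fin.prod_univ_three, h1, mul_zero, zero_mul]
    · obtain ⟨m, rfl⟩ := σ.surjective i
      fin_cases m
      · show 2 * w (σ 0) ^ 2 = Rv (σ 0) ^ 2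
        rw [hw0, h02, neg_sq]
      · simp [h1, hw1]
      · exact hw2

/-- Both `M` and `Ω` of the 5D type II Weyl operator are nilpotent iff, after a suitable
permutation of indices, `R = 0`, `R₄ = 0`, `R₃ = -R₅ ≠ 0`, `2w₃² = 2w₅² = R₅²`, `w₄ = 0`.
In that case `M³ = 0 ≠ M²` and `Ω³ = 0 ≠ Ω²`. -/
theorem stmt10 (Rv w : Fin 3 → ℝ)
    (hnz : ¬ (Rv = 0 ∧ w = 0))
    (M : Matrix (Fin 3) (Fin 3) ℝ)
    (hM : M = Matrix.of fun i j =>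
      (if i = j then -(Rv i) / 2 else 0) - (1/2) * ∑ k, eps i j k * w k)
    (R : ℝ) (hR : R = Rv 0 + Rv 1 + Rv 2)
    (Om : Matrix (Fin 4) (Fin 4) ℝ)
    (hOm : Om = !![R/2, -(w 0), -(w 1), -(w 2);
                   w 0, R/2 - Rv 0, 0, 0;
                   w 1, 0, R/2 - Rv 1, 0;
                   w 2, 0, 0, R/2 - Rv 2]) :
    ((IsNilpotent M ∧ IsNilpotent Om) ↔
      (R = 0 ∧ ∃ σ : Equiv.Perm (Fin 3),
        Rv (σ 1) = 0 ∧ Rv (σ 0) = -(Rv (σ 2)) ∧ Rv (σ 2) ≠ 0 ∧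
        2 * (w (σ 0)) ^ 2 = (Rv (σ 2)) ^ 2 ∧ 2 * (w (σ 2)) ^ 2 = (Rv (σ 2)) ^ 2 ∧
        w (σ 1) = 0)) ∧
    ((IsNilpotent M ∧ IsNilpotent Om) →
      (M ^ 3 = 0 ∧ M ^ 2 ≠ 0 ∧ Om ^ 3 = 0 ∧ Om ^ 2 ≠ 0)) := by
  rw [of_eps_eq_weylM] at hM
  replace hOm : Om = weylΩ R Rv w := hOm
  replace hR : R = ∑ i, Rv i := by rw [hR, Fin.sum_univ_three]
  subst hM hOm
  have data_of_nilpotent (h : IsNilpotent (weylM Rv w) ∧ IsNilpotent (weylΩ R Rv w)) :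
      R = 0 ∧ NilpotentWeylData Rv w := by
    obtain rfl : R = 0 := hR.trans (sum_eq_zero_of_isNilpotent_weylM h.1)
    exact ⟨rfl, nilpotentWeylData_of_isNilpotent h.1 h.2⟩
  have powers_of_data (hR0 : R = 0) (h : NilpotentWeylData Rv w) :
      weylM Rv w ^ 3 = 0 ∧ weylM Rv w ^ 2 ≠ 0 ∧
        weylΩ R Rv w ^ 3 = 0 ∧ weylΩ R Rv w ^ 2 ≠ 0 := by
    subst hR0
    exact ⟨h.weylM_pow_three, h.weylM_sq_ne_zero hnz,
      h.weylΩ_pow_three, h.weylΩ_sq_ne_zero hnz⟩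
  have data_iff := nilpotentWeylData_iff_exists_perm hnz
  refine ⟨⟨fun h => ?_, fun ⟨hR0, hσ⟩ => ?_⟩,
    fun h => (data_of_nilpotent h).elim powers_of_data⟩
  · obtain ⟨hR0, hdata⟩ := data_of_nilpotent h
    exact ⟨hR0, data_iff.mp hdata⟩
  · obtain ⟨hM3, -, hΩ3, -⟩ := powers_of_data hR0 (data_iff.mpr hσ)
    exact ⟨⟨3, hM3⟩, ⟨3, hΩ3⟩⟩
end

section
/- For the 4×4 matrix Ω of the 5D type II Weyl operator, if Ω ≠ 0 then rank(Ω) ≥ 2, i.e., Ω cannot have rank 1. -/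
open Matrix

/-- A nonzero `2 × 2` minor forces rank at least `2`. -/
lemma rank_ge_two_of_minor {n : Type*} [Fintype n] [DecidableEq n]
    (A : Matrix n n ℝ) (i0 i1 j0 j1 : n)
    (hd : A i0 j0 * A i1 j1 - A i0 j1 * A i1 j0 ≠ 0) : 2 ≤ A.rank := by
  set x : n → ℝ := fun i => A i j0 with hxdef
  set y : n → ℝ := fun i => A i j1 with hydef
  have hx : x ∈ LinearMap.range A.mulVecLin := by
    refine ⟨Pi.single j0 1, ?_⟩
    ext i
    simp [Matrix.mulVecLin_apply, Matrix.mulVec_single, hxdef]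
  have hy : y ∈ LinearMap.range A.mulVecLin := by
    refine ⟨Pi.single j1 1, ?_⟩
    ext i
    simp [Matrix.mulVecLin_apply, Matrix.mulVec_single, hydef]
  have hli : LinearIndependent ℝ ![x, y] := by
    rw [LinearIndependent.pair_iff]
    intro s t hst
    have h0 : s * A i0 j0 + t * A i0 j1 = 0 := by
      have := congrFun hst i0
      simpa [hxdef, hydef] using this
    have h1 : s * A i1 j0 + t * A i1 j1 = 0 := by
      have := congrFun hst i1
      simpa [hxdef, hydef] using this
    constructor
    · have hs : s * (A i0 j0 * A i1 j1 - A i0 j1 * A i1 j0) = 0 := by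
        linear_combination A i1 j1 * h0 - A i0 j1 * h1
      exact (mul_eq_zero.mp hs).resolve_right hd
    · have ht : t * (A i0 j0 * A i1 j1 - A i0 j1 * A i1 j0) = 0 := by
        linear_combination A i0 j0 * h1 - A i1 j0 * h0
      exact (mul_eq_zero.mp ht).resolve_right hd
  have hspan : Submodule.span ℝ (Set.range ![x, y]) ≤ LinearMap.range A.mulVecLin := by
    rw [Submodule.span_le]
    rintro v ⟨k, rfl⟩
    fin_cases k
    · exact hx
    · exact hy
  have h2 : Module.finrank ℝ (Submodule.span ℝ (Set.range ![x, y])) = 2 := by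
    rw [finrank_span_eq_card hli]
    simp
  calc (2 : ℕ) = Module.finrank ℝ (Submodule.span ℝ (Set.range ![x, y])) := h2.symm
    _ ≤ Module.finrank ℝ (LinearMap.range A.mulVecLin) := Submodule.finrank_mono hspan
    _ = A.rank := rfl

/-- The `4 × 4` matrix `Ω` of the 5D type II Weyl operator, when nonzero
(i.e. when not all parameters vanish), has rank at least 2. -/
theorem stmt11 (R3 R4 R5 w3 w4 w5 R : ℝ) (hR : R = R3 + R4 + R5)
    (hnz : ¬ (R3 = 0 ∧ R4 = 0 ∧ R5 = 0 ∧ w3 = 0 ∧ w4 = 0 ∧ w5 = 0))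
    (Om : Matrix (Fin 4) (Fin 4) ℝ)
    (hOm : Om = !![R/2, -w3, -w4, -w5;
                   w3, R/2 - R3, 0, 0;
                   w4, 0, R/2 - R4, 0;
                   w5, 0, 0, R/2 - R5]) :
    2 ≤ Om.rank := by
  subst hOm
  set A := !![R/2, -w3, -w4, -w5;
              w3, R/2 - R3, 0, 0;
              w4, 0, R/2 - R4, 0;
              w5, 0, 0, R/2 - R5] with hA
  have e00 : A 0 0 = R/2 := rfl
  have e01 : A 0 1 = -w3 := rfl
  have e02 : A 0 2 = -w4 := rfl
  have e03 : A 0 3 = -w5 := rfl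
  have e10 : A 1 0 = w3 := rfl
  have e20 : A 2 0 = w4 := rfl
  have e30 : A 3 0 = w5 := rfl
  have e11 : A 1 1 = R/2 - R3 := rfl
  have e22 : A 2 2 = R/2 - R4 := rfl
  have e33 : A 3 3 = R/2 - R5 := rfl
  have e12 : A 1 2 = 0 := rfl
  have e21 : A 2 1 = 0 := rfl
  have e13 : A 1 3 = 0 := rfl
  have e31 : A 3 1 = 0 := rfl
  have e23 : A 2 3 = 0 := rfl
  have e32 : A 3 2 = 0 := rfl
  by_cases h1 : R/2 * (R/2 - R3) + w3 * w3 = 0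
  · by_cases h2 : R/2 * (R/2 - R4) + w4 * w4 = 0
    · by_cases h3 : R/2 * (R/2 - R5) + w5 * w5 = 0
      · -- all three "symplectic" minors vanish; their sum is (R/2)^2 + w3^2+w4^2+w5^2
        have hsum : (R/2)^2 + w3^2 + w4^2 + w5^2 = 0 := by
          linear_combination h1 + h2 + h3 - (R/2) * hR
        have hRz : R = 0 := by
          have : (R/2)^2 = 0 := le_antisymm
            (by linarith [sq_nonneg w3, sq_nonneg w4, sq_nonneg w5]) (sq_nonneg _)
          have := sq_eq_zero_iff.mp this
          linarith
        have hw3 : w3 = 0 := sq_eq_zero_iff.mp (le_antisymm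
          (by linarith [sq_nonneg (R/2), sq_nonneg w4, sq_nonneg w5]) (sq_nonneg _))
        have hw4 : w4 = 0 := sq_eq_zero_iff.mp (le_antisymm
          (by linarith [sq_nonneg (R/2), sq_nonneg w3, sq_nonneg w5]) (sq_nonneg _))
        have hw5 : w5 = 0 := sq_eq_zero_iff.mp (le_antisymm
          (by linarith [sq_nonneg (R/2), sq_nonneg w3, sq_nonneg w4]) (sq_nonneg _))
        have hsum0 : R3 + R4 + R5 = 0 := by linarith [hR, hRz]
        by_cases hr3 : R3 = 0
        · -- then R4 = -R5 and one of them is nonzero, hence both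
          have h45 : R4 + R5 = 0 := by linarith
          have h4 : R4 ≠ 0 := by
            intro h4
            exact hnz ⟨hr3, h4, by linarith, hw3, hw4, hw5⟩
          have h5 : R5 ≠ 0 := by intro h5; exact h4 (by linarith)
          apply rank_ge_two_of_minor A 2 3 2 3
          rw [e22, e33, e23, e32]
          have hval : (R/2 - R4) * (R/2 - R5) - 0 * 0 = R4 * R5 := by rw [hRz]; ring
          rw [hval]
          exact mul_ne_zero h4 h5
        · by_cases hr4 : R4 = 0
          · have h5 : R5 ≠ 0 := by intro h5; exact hr3 (by linarith)
            apply rank_ge_two_of_minor A 1 3 1 3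
            rw [e11, e33, e13, e31]
            have hval : (R/2 - R3) * (R/2 - R5) - 0 * 0 = R3 * R5 := by rw [hRz]; ring
            rw [hval]
            exact mul_ne_zero hr3 h5
          · apply rank_ge_two_of_minor A 1 2 1 2
            rw [e11, e22, e12, e21]
            have hval : (R/2 - R3) * (R/2 - R4) - 0 * 0 = R3 * R4 := by rw [hRz]; ring
            rw [hval]
            exact mul_ne_zero hr3 hr4
      · apply rank_ge_two_of_minor A 0 3 0 3
        rw [e00, e33, e03, e30]
        intro h
        exact h3 (by linear_combination h)
    · apply rank_ge_two_of_minor A 0 2 0 2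
      rw [e00, e22, e02, e20]
      intro h
      exact h2 (by linear_combination h)
  · apply rank_ge_two_of_minor A 0 1 0 1
    rw [e00, e11, e01, e10]
    intro h
    exact h1 (by linear_combination h)
end

section
/- The characteristic-polynomial coefficients of M and Ω satisfy: tr M = -R/2 = -½ tr Ω; σ²_Ω = 4σ²_M where 4σ²_M = R₄R₅ + R₅R₃ + R₃R₄ + w₃² + w₄² + w₅²; and -8 det M = R₃R₄R₅ + R₃w₃² + R₄w₄² + R₅w₅². -/
open Matrix

/-! The second coefficient `σ₂` of a characteristic polynomial, the sum of the principal `2 × 2`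
minors, equals `((tr A)² - tr (A²)) / 2`: summing the minors over ordered pairs of distinct
indices counts each one twice, and the diagonal pairs contribute nothing. Here `tr Ω = R = -2 tr M`
and `tr (Ω²) = R₃² + R₄² + R₅² - 2 (w₃² + w₄² + w₅²) = 4 tr (M²)`, whence `σ²_Ω = 4 σ²_M`. -/

open Finset in
theorem Finset.two_nsmul_sum_powersetCard_two {α β : Type*} [DecidableEq α] [AddCommMonoid β]
    (s : Finset α) (f : Finset α → β) :
    2 • ∑ t ∈ s.powersetCard 2, f t = ∑ p ∈ s.offDiag, f {p.1, p.2} := by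
  have hmaps : ∀ p ∈ s.offDiag, ({p.1, p.2} : Finset α) ∈ s.powersetCard 2 := by
    rintro ⟨a, b⟩ hp
    obtain ⟨ha, hb, hab⟩ := mem_offDiag.mp hp
    simp [mem_powersetCard, insert_subset_iff, ha, hb, card_pair hab]
  rw [← sum_fiberwise_of_maps_to hmaps, smul_sum]
  refine sum_congr rfl fun t ht => ?_
  obtain ⟨hts, htcard⟩ := mem_powersetCard.mp ht
  obtain ⟨a, b, hab, rfl⟩ := card_eq_two.mp htcard
  have hfiber : {p ∈ s.offDiag | ({p.1, p.2} : Finset α) = {a, b}} = {(a, b), (b, a)} := by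
    have ha : a ∈ s := hts (by simp)
    have hb : b ∈ s := hts (by simp)
    ext ⟨c, d⟩
    simp only [mem_filter, mem_offDiag, mem_insert, mem_singleton, Prod.mk.injEq]
    constructor
    · rintro ⟨⟨-, -, hcd⟩, h⟩
      have hc : c ∈ ({a, b} : Finset α) := h ▸ by simp
      have hd : d ∈ ({a, b} : Finset α) := h ▸ by simp
      simp only [mem_insert, mem_singleton] at hc hd
      grind
    · rintro (⟨rfl, rfl⟩ | ⟨rfl, rfl⟩)
      · exact ⟨⟨ha, hb, hab⟩, rfl⟩
      · exact ⟨⟨hb, ha, Ne.symm hab⟩, pair_comm _ _⟩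
  rw [sum_congr rfl fun p hp => congrArg f (mem_filter.mp hp).2, sum_const, hfiber,
    card_pair (by simp [hab])]

theorem Matrix.det_submatrix_pair {n R : Type*} [DecidableEq n] [CommRing R]
    (A : Matrix n n R) {i j : n} (hij : i ≠ j) :
    (A.submatrix (Subtype.val : ({i, j} : Finset n) → n) Subtype.val).det
      = A i i * A j j - A i j * A j i := by
  have hmem : ∀ k, ![i, j] k ∈ ({i, j} : Finset n) := by simp [Fin.forall_fin_two]
  let e : Fin 2 ≃ ({i, j} : Finset n) :=
    Equiv.ofBijective (fun k => ⟨![i, j] k, hmem k⟩) <| by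
      rw [Fintype.bijective_iff_injective_and_card]
      refine ⟨fun k l hkl => ?_, by simp [Finset.card_pair hij]⟩
      fin_cases k <;> fin_cases l <;> simp_all
  rw [← det_submatrix_equiv_self e, submatrix_submatrix, det_fin_two]
  rfl

open Finset in
theorem Matrix.two_mul_charpoly_coeff_card_sub_two {n R : Type*} [Fintype n] [DecidableEq n]
    [CommRing R] (A : Matrix n n R) (hn : 2 ≤ Fintype.card n) :
    2 * A.charpoly.coeff (Fintype.card n - 2) = A.trace ^ 2 - (A * A).trace := by
  have hminors : ∑ p ∈ (univ : Finset n).offDiag,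
        (A.submatrix (Subtype.val : ({p.1, p.2} : Finset n) → n) Subtype.val).det
      = ∑ p ∈ (univ : Finset n).offDiag, (A p.1 p.1 * A p.2 p.2 - A p.1 p.2 * A p.2 p.1) :=
    sum_congr rfl fun p hp => det_submatrix_pair A (mem_offDiag.mp hp).2.2
  have hdiag_vanish :
      ∑ p ∈ (univ : Finset n).offDiag, (A p.1 p.1 * A p.2 p.2 - A p.1 p.2 * A p.2 p.1)
      = ∑ p ∈ univ ×ˢ univ, (A p.1 p.1 * A p.2 p.2 - A p.1 p.2 * A p.2 p.1) := by
    refine sum_subset (fun p _ => by simp) fun ⟨i, j⟩ _ hp => ?_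
    obtain rfl : i = j := by simpa using hp
    ring
  rw [charpoly_coeff_eq_sum_minors A 2 hn, neg_one_sq, one_mul, two_mul, ← two_nsmul,
    two_nsmul_sum_powersetCard_two, hminors, hdiag_vanish, sum_product, sq, trace, trace,
    sum_mul_sum, ← sum_sub_distrib]
  simp only [diag_apply, mul_apply, ← sum_sub_distrib]

/-- Characteristic-polynomial coefficients of `M` and `Ω`:
`tr M = -R/2 = -½ tr Ω`, `σ²_Ω = 4σ²_M` with
`4σ²_M = R₄R₅ + R₅R₃ + R₃R₄ + w₃² + w₄² + w₅²`, and
`-8 det M = R₃R₄R₅ + R₃w₃² + R₄w₄² + R₅w₅²`. -/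
theorem stmt12 (R3 R4 R5 w3 w4 w5 R : ℝ) (hR : R = R3 + R4 + R5)
    (M : Matrix (Fin 3) (Fin 3) ℝ)
    (hM : M = !![-R3/2, -w5/2, w4/2;
                 w5/2, -R4/2, -w3/2;
                 -w4/2, w3/2, -R5/2])
    (Om : Matrix (Fin 4) (Fin 4) ℝ)
    (hOm : Om = !![R/2, -w3, -w4, -w5;
                   w3, R/2 - R3, 0, 0;
                   w4, 0, R/2 - R4, 0;
                   w5, 0, 0, R/2 - R5]) :
    M.trace = -R/2 ∧
    Om.trace = R ∧
    4 * M.charpoly.coeff 1 = R4*R5 + R5*R3 + R3*R4 + w3^2 + w4^2 + w5^2 ∧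
    Om.charpoly.coeff 2 = 4 * M.charpoly.coeff 1 ∧
    -8 * M.det = R3*R4*R5 + R3*w3^2 + R4*w4^2 + R5*w5^2 := by
  have hσM : 2 * M.charpoly.coeff 1 = M.trace ^ 2 - (M * M).trace :=
    M.two_mul_charpoly_coeff_card_sub_two (by simp)
  have hσOm : 2 * Om.charpoly.coeff 2 = Om.trace ^ 2 - (Om * Om).trace :=
    Om.two_mul_charpoly_coeff_card_sub_two (by simp)
  have htrM : M.trace = -(R3 + R4 + R5) / 2 := by
    rw [hM, trace_fin_three_of]; ring
  have htrM2 : (M * M).trace = (R3^2 + R4^2 + R5^2) / 4 - (w3^2 + w4^2 + w5^2) / 2 := by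
    rw [hM, mul_fin_three, trace_fin_three_of]; ring
  have hdetM : M.det = -(R3*R4*R5 + R3*w3^2 + R4*w4^2 + R5*w5^2) / 8 := by
    rw [hM, det_fin_three]; simp only [of_apply, cons_val]; ring
  have htrOm : Om.trace = R := by
    rw [hOm, trace, Fin.sum_univ_four]; simp only [diag_apply, of_apply, cons_val]; rw [hR]; ring
  have htrOm2 : (Om * Om).trace = R3^2 + R4^2 + R5^2 - 2 * (w3^2 + w4^2 + w5^2) := by
    rw [hOm, trace, Fin.sum_univ_four]
    simp only [diag_apply, mul_apply, Fin.sum_univ_four, of_apply, cons_val]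
    rw [hR]; ring
  rw [htrM, htrM2] at hσM
  rw [htrOm, htrOm2] at hσOm
  subst hR
  exact ⟨by linear_combination htrM, htrOm, by linear_combination 2 * hσM,
    by linear_combination hσOm / 2 - 2 * hσM, by linear_combination -8 * hdetM⟩
end

section
/- If M has rank 1, i.e. (up to a permutation of indices) R₃ = 0, w₄ = w₅ = 0, w₃² = -R₄R₅ with (R₄,R₅) ≠ (0,0), then R₄ ≠ R₅ and det Ω = -(1/16)(R₄-R₅)⁴ ≠ 0, so rank(Ω) = 4. -/
/-! With `w₄ = w₅ = 0` the matrix `Ω` is an arrowhead matrix whose determinant factors as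
`(R/2 - R₄)(R/2 - R₅)((R/2 - R₃) R/2 + w₃²)`. For `R₃ = 0`, `R = R₄ + R₅` and `w₃² = -R₄R₅` the
first two factors are `±(R₄ - R₅)/2` and the last is `((R₄ - R₅)/2)²`. Finally `R₄ = R₅` is
impossible, since then `w₃² = -R₄²` forces `R₄ = R₅ = 0`. -/

open Matrix

theorem Matrix.det_fin_four_arrowhead {K : Type*} [CommRing K] (a b c d e f g : K) :
    !![a, -b, -c, -d;
       b, e, 0, 0;
       c, 0, f, 0;
       d, 0, 0, g].det = a * e * f * g + b ^ 2 * f * g + c ^ 2 * e * g + d ^ 2 * e * f := by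
  simp [det_succ_row_zero, Fin.sum_univ_succ, Fin.succAbove]
  ring

theorem ne_of_sq_eq_neg_mul {K : Type*} [CommRing K] [LinearOrder K] [IsStrictOrderedRing K]
    {x y w : K} (hw : w ^ 2 = -(x * y)) (hxy : ¬ (x = 0 ∧ y = 0)) : x ≠ y := by
  rintro rfl
  have hx : x = 0 := by nlinarith [sq_nonneg w]
  exact hxy ⟨hx, hx⟩

/-- If `M` has rank 1, i.e. `R₃ = 0`, `w₄ = w₅ = 0`, `w₃² = -R₄R₅` with
`(R₄, R₅) ≠ (0,0)`, then `R₄ ≠ R₅`, `det Ω = -(1/16)(R₄ - R₅)⁴ ≠ 0`, and `rank Ω = 4`. -/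
theorem stmt14 (R3 R4 R5 w3 w4 w5 R : ℝ) (hR : R = R3 + R4 + R5)
    (hR3 : R3 = 0) (hw4 : w4 = 0) (hw5 : w5 = 0)
    (hw3 : w3 ^ 2 = -(R4 * R5))
    (hnz : ¬ (R4 = 0 ∧ R5 = 0))
    (Om : Matrix (Fin 4) (Fin 4) ℝ)
    (hOm : Om = !![R/2, -w3, -w4, -w5;
                   w3, R/2 - R3, 0, 0;
                   w4, 0, R/2 - R4, 0;
                   w5, 0, 0, R/2 - R5]) :
    R4 ≠ R5 ∧ Om.det = -(1/16) * (R4 - R5) ^ 4 ∧ Om.det ≠ 0 ∧ Om.rank = 4 := by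
  have hne : R4 ≠ R5 := ne_of_sq_eq_neg_mul hw3 hnz
  have hdet : Om.det = -(1/16) * (R4 - R5) ^ 4 := by
    rw [hOm, det_fin_four_arrowhead, hw4, hw5, hR, hR3]
    linear_combination (R5 - R4) * (R4 - R5) / 4 * hw3
  have hdet_ne : Om.det ≠ 0 := by
    have : R4 - R5 ≠ 0 := sub_ne_zero.mpr hne
    rw [hdet]
    positivity
  exact ⟨hne, hdet, hdet_ne, by simpa using rank_of_det_ne_zero hdet_ne⟩
end

section
/- Let T be an endomorphism of a finite-dimensional vector space V over an algebraically closed field, and for λ an eigenvalue let s(λ) be the least natural number with ker(T-λ)^{s} = ker(T-λ)^{s+1}. Then the operator ⊥_λ := id - (id - P̃_λ)^{s(λ)}, where P̃_λ = ∏_{μ≠λ}(T-μ)^{s(μ)} / ∏_{μ≠λ}(λ-μ)^{s(μ)} (product over the other eigenvalues μ of T), is the projection onto the generalized eigenspace ker(T-λ)^{s(λ)} along the sum of the other generalized eigenspaces. -/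
open Polynomial

/-- For `T` an endomorphism of a finite-dimensional vector space over an algebraically
closed field with distinct eigenvalues `λ₁,…,λ_r` and stabilization indices `s(λ_A)`,
the operator `⊥_A = 1 - (1 - P̃_A)^{s(λ_A)}`, where
`P̃_A = ∏_{B≠A}(T - λ_B)^{s(λ_B)} / ∏_{B≠A}(λ_A - λ_B)^{s(λ_B)}`,
is the projection onto the generalized eigenspace `ker (T - λ_A)^{s(λ_A)}`
along the sum of the other generalized eigenspaces. -/
theorem stmt18 {K V : Type*} [Field K] [IsAlgClosed K] [AddCommGroup V] [Module K V]
    [FiniteDimensional K V] (T : Module.End K V) (r : ℕ) (lam : Fin r → K)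
    (hinj : Function.Injective lam)
    (heig : ∀ A, Module.End.HasEigenvalue T (lam A))
    (hall : ∀ μ : K, Module.End.HasEigenvalue T μ → ∃ A, lam A = μ)
    (s : Fin r → ℕ)
    (hstab : ∀ A, LinearMap.ker ((T - lam A • 1) ^ s A) =
      LinearMap.ker ((T - lam A • 1) ^ (s A + 1)))
    (hmin : ∀ A, ∀ m < s A, LinearMap.ker ((T - lam A • 1) ^ m) ≠
      LinearMap.ker ((T - lam A • 1) ^ (m + 1)))
    (htop : ⨆ A, LinearMap.ker ((T - lam A • 1) ^ s A) = ⊤)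
    (A : Fin r) :
    (∀ v ∈ LinearMap.ker ((T - lam A • 1) ^ s A),
      ((1 : Module.End K V) - ((1 : Module.End K V) -
        (∏ B ∈ Finset.univ.erase A, (lam A - lam B) ^ s B)⁻¹ •
          Polynomial.aeval T
            (∏ B ∈ Finset.univ.erase A, (X - Polynomial.C (lam B)) ^ s B)) ^ s A) v = v) ∧
    (∀ B, B ≠ A → ∀ v ∈ LinearMap.ker ((T - lam B • 1) ^ s B),
      ((1 : Module.End K V) - ((1 : Module.End K V) -
        (∏ B ∈ Finset.univ.erase A, (lam A - lam B) ^ s B)⁻¹ •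
          Polynomial.aeval T
            (∏ B ∈ Finset.univ.erase A, (X - Polynomial.C (lam B)) ^ s B)) ^ s A) v = 0) := by

  set c : K := ∏ B ∈ Finset.univ.erase A, (lam A - lam B) ^ s B with hc
  set p : K[X] := ∏ B ∈ Finset.univ.erase A, (X - Polynomial.C (lam B)) ^ s B with hp
  have hc0 : c ≠ 0 := by
    rw [hc]
    apply Finset.prod_ne_zero_iff.mpr
    intro B hB
    have hne : lam A ≠ lam B := fun h => (Finset.mem_erase.mp hB).1 (hinj h).symm
    exact pow_ne_zero _ (sub_ne_zero.mpr hne)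
  have hpA : p.eval (lam A) = c := by
    rw [hp, hc, Polynomial.eval_prod]
    exact Finset.prod_congr rfl (fun B _ => by simp)
  have haevalXC : ∀ μ : K, Polynomial.aeval T (X - Polynomial.C μ) = T - μ • 1 := by
    intro μ
    simp [Module.algebraMap_end_eq_smul_id]; rfl
  constructor
  · intro v hv
    have hv0 : ((T - lam A • 1) ^ s A) v = 0 := hv
    have hdvd : (X - Polynomial.C (lam A)) ∣ (1 - c⁻¹ • p) := by
      rw [dvd_iff_isRoot]
      simp [Polynomial.IsRoot, hpA, inv_mul_cancel₀ hc0]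
    obtain ⟨q, hq⟩ := hdvd
    have key : ((1 : Module.End K V) - c⁻¹ • Polynomial.aeval T p) ^ s A
        = Polynomial.aeval T (q ^ s A) * (T - lam A • 1) ^ s A := by
      have h1 : (1 : Module.End K V) - c⁻¹ • Polynomial.aeval T p
          = Polynomial.aeval T ((X - Polynomial.C (lam A)) * q) := by
        rw [← hq, map_sub, map_smul, map_one]
      rw [h1, ← map_pow, mul_pow, mul_comm, map_mul, map_pow, map_pow, haevalXC]
    rw [LinearMap.sub_apply, Module.End.one_apply, key, Module.End.mul_apply, hv0,
      map_zero, sub_zero]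
  · intro B hB v hv
    have hv0 : ((T - lam B • 1) ^ s B) v = 0 := hv
    have hBmem : B ∈ Finset.univ.erase A := Finset.mem_erase.mpr ⟨hB, Finset.mem_univ B⟩
    have hpB : p = (∏ C ∈ (Finset.univ.erase A).erase B, (X - Polynomial.C (lam C)) ^ s C)
        * (X - Polynomial.C (lam B)) ^ s B := (Finset.prod_erase_mul _ _ hBmem).symm
    have hQv : (Polynomial.aeval T p) v = 0 := by
      rw [hpB, map_mul, Module.End.mul_apply, map_pow, haevalXC, hv0, map_zero]
    have hfix : ∀ n, (((1 : Module.End K V) - c⁻¹ • Polynomial.aeval T p) ^ n) v = v := by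
      intro n
      induction n with
      | zero => simp
      | succ n ih =>
        rw [pow_succ, Module.End.mul_apply]
        have h1 : ((1 : Module.End K V) - c⁻¹ • Polynomial.aeval T p) v = v := by
          simp [LinearMap.sub_apply, LinearMap.smul_apply, hQv]
        rw [h1, ih]
    rw [LinearMap.sub_apply, Module.End.one_apply, hfix, sub_self]
end
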